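/- Let char F ≠ 2 and Q as above. If a₁, a₂, a₃, a₄ all lie in span{u₁, u₂, u₃} or all lie in span{v₁, v₂, v₃}, then Q(a₁,a₂,a₃,a₄) = 0. Also Q(e₁, e₂, u_i, v_j) = −δ_{ij}. -/

import Mathlib

/-
The Zorn algebra is `ℤ/3`-graded: the diagonal `mk α β 0 0` in degree 0, the `up` part
(`span{uᵢ}`) in degree 1 and the `lo` part (`span{vᵢ}`) in degree 2, and the trace only sees
degree 0. For arguments of degree 1 (or 2) the traces in `M` vanish, so `M` lands in degree 2
(resp. 1), and each term `t(M(·,·) M(·,·))` of `Q` is the trace of an element of nonzero degree.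

For `Q(e₁, e₂, u, v)`, `e₁` and `e₂` act on `u` and `v` by scalars (Peirce decomposition), so
each `M`-value is a multiple of `u`, `v` or `e₁ - e₂`; with `p = u·v` the six terms of `Q` are
`-p, -p/4, 9p/4, -p/4, 9p/4, p`, and `Q = -p`.
-/

open Matrix

/-- The Zorn vector-matrix algebra: elements `(α, u; v, β)` with `α β : F`, `u v : F³`. -/
def Zorn (F : Type*) : Type _ := F × F × (Fin 3 → F) × (Fin 3 → F)

namespace Zorn

variable {F : Type*} [Field F]

/-- Build a Zorn matrix from its four components. -/
def mk (a b : F) (u v : Fin 3 → F) : Zorn F := (a, b, u, v)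

/-- The upper-left scalar entry `α`. -/
def al (x : Zorn F) : F := x.1
/-- The lower-right scalar entry `β`. -/
def be (x : Zorn F) : F := x.2.1
/-- The upper-right vector entry `u`. -/
def up (x : Zorn F) : Fin 3 → F := x.2.2.1
/-- The lower-left vector entry `v`. -/
def lo (x : Zorn F) : Fin 3 → F := x.2.2.2

instance : AddCommGroup (Zorn F) :=
  inferInstanceAs (AddCommGroup (F × F × (Fin 3 → F) × (Fin 3 → F)))

instance : Module F (Zorn F) :=
  inferInstanceAs (Module F (F × F × (Fin 3 → F) × (Fin 3 → F)))

/-- Zorn vector-matrix multiplication. -/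
instance : Mul (Zorn F) :=
  ⟨fun x y => mk (x.al * y.al + x.up ⬝ᵥ y.lo)
      (x.be * y.be + x.lo ⬝ᵥ y.up)
      (x.al • y.up + y.be • x.up - crossProduct x.lo y.lo)
      (y.al • x.lo + x.be • y.lo + crossProduct x.up y.up)⟩

instance : One (Zorn F) := ⟨mk 1 1 0 0⟩

/-- The standard conjugation (involution) of the Zorn algebra. -/
def conj (x : Zorn F) : Zorn F := mk x.be x.al (-x.up) (-x.lo)

/-- The trace `t(a) = α + β` (the scalar such that `a + conj a = t a • 1`). -/
def t (x : Zorn F) : F := x.al + x.be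

/-- The norm `n(a) = αβ - u·v` (the scalar such that `a * conj a = n a • 1`). -/
def n (x : Zorn F) : F := x.al * x.be - x.up ⬝ᵥ x.lo

/-- The idempotent `e₁`. -/
def e₁ : Zorn F := mk 1 0 0 0
/-- The idempotent `e₂`. -/
def e₂ : Zorn F := mk 0 1 0 0
/-- The basis element `u_i`. -/
def U (i : Fin 3) : Zorn F := mk 0 0 (Pi.single i 1) 0
/-- The basis element `v_i`. -/
def V (i : Fin 3) : Zorn F := mk 0 0 0 (Pi.single i 1)

/-- An (algebra) automorphism of the Zorn algebra: a bijective `F`-linear,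
multiplicative, unital self-map. -/
def IsAut (g : Zorn F → Zorn F) : Prop :=
  Function.Bijective g ∧ (∀ x y : Zorn F, g (x + y) = g x + g y) ∧
    (∀ (c : F) (x : Zorn F), g (c • x) = c • g x) ∧
    (∀ x y : Zorn F, g (x * y) = g x * g y) ∧ g 1 = 1

end Zorn

open Zorn

/-- `M(z₁,z₂) = ½(z₁z₂ − z₂z₁) + t(z₁)z₂ − t(z₂)z₁`. -/
def M {F : Type*} [Field F] (z₁ z₂ : Zorn F) : Zorn F :=
  (2 : F)⁻¹ • (z₁ * z₂ - z₂ * z₁) + Zorn.t z₁ • z₂ - Zorn.t z₂ • z₁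

/-- `F(z₁,z₂,z₃,z₄) = t(M(z₁,z₂)·M(z₃,z₄))`. -/
def Fq {F : Type*} [Field F] (z₁ z₂ z₃ z₄ : Zorn F) : F :=
  Zorn.t (M z₁ z₂ * M z₃ z₄)

/-- `Q`, the complete skew symmetrization of `F(z₁,z₂,z₃,z₄)`. -/
def Q {F : Type*} [Field F] (z₁ z₂ z₃ z₄ : Zorn F) : F :=
  (6 : F)⁻¹ * (Fq z₁ z₂ z₃ z₄ - Fq z₃ z₂ z₁ z₄ - Fq z₄ z₂ z₃ z₁ - Fq z₁ z₄ z₃ z₂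
    - Fq z₁ z₃ z₂ z₄ - Fq z₃ z₄ z₂ z₁)

namespace Zorn

section

variable {F : Type*}

@[ext]
lemma ext {x y : Zorn F} (hal : x.al = y.al) (hbe : x.be = y.be) (hup : x.up = y.up)
    (hlo : x.lo = y.lo) : x = y :=
  Prod.ext hal (Prod.ext hbe (Prod.ext hup hlo))

@[simp] lemma al_mk (a b : F) (u v : Fin 3 → F) : (mk a b u v).al = a := rfl
@[simp] lemma be_mk (a b : F) (u v : Fin 3 → F) : (mk a b u v).be = b := rfl
@[simp] lemma up_mk (a b : F) (u v : Fin 3 → F) : (mk a b u v).up = u := rfl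
@[simp] lemma lo_mk (a b : F) (u v : Fin 3 → F) : (mk a b u v).lo = v := rfl

end

variable {F : Type*} [Field F]

@[simp] lemma al_zero : (0 : Zorn F).al = 0 := rfl
@[simp] lemma be_zero : (0 : Zorn F).be = 0 := rfl
@[simp] lemma up_zero : (0 : Zorn F).up = 0 := rfl
@[simp] lemma lo_zero : (0 : Zorn F).lo = 0 := rfl

@[simp] lemma al_add (x y : Zorn F) : (x + y).al = x.al + y.al := rfl
@[simp] lemma be_add (x y : Zorn F) : (x + y).be = x.be + y.be := rfl
@[simp] lemma up_add (x y : Zorn F) : (x + y).up = x.up + y.up := rfl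
@[simp] lemma lo_add (x y : Zorn F) : (x + y).lo = x.lo + y.lo := rfl

@[simp] lemma al_sub (x y : Zorn F) : (x - y).al = x.al - y.al := rfl
@[simp] lemma be_sub (x y : Zorn F) : (x - y).be = x.be - y.be := rfl
@[simp] lemma up_sub (x y : Zorn F) : (x - y).up = x.up - y.up := rfl
@[simp] lemma lo_sub (x y : Zorn F) : (x - y).lo = x.lo - y.lo := rfl

@[simp] lemma al_smul (c : F) (x : Zorn F) : (c • x).al = c * x.al := rfl
@[simp] lemma be_smul (c : F) (x : Zorn F) : (c • x).be = c * x.be := rfl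
@[simp] lemma up_smul (c : F) (x : Zorn F) : (c • x).up = c • x.up := rfl
@[simp] lemma lo_smul (c : F) (x : Zorn F) : (c • x).lo = c • x.lo := rfl

@[simp] lemma al_mul (x y : Zorn F) : (x * y).al = x.al * y.al + x.up ⬝ᵥ y.lo := rfl
@[simp] lemma be_mul (x y : Zorn F) : (x * y).be = x.be * y.be + x.lo ⬝ᵥ y.up := rfl
@[simp] lemma up_mul (x y : Zorn F) :
    (x * y).up = x.al • y.up + y.be • x.up - crossProduct x.lo y.lo := rfl
@[simp] lemma lo_mul (x y : Zorn F) :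
    (x * y).lo = y.al • x.lo + x.be • y.lo + crossProduct x.up y.up := rfl

def upSubmodule : Submodule F (Zorn F) where
  carrier := {x | x.al = 0 ∧ x.be = 0 ∧ x.lo = 0}
  add_mem' := by
    rintro x y ⟨hxa, hxb, hxl⟩ ⟨hya, hyb, hyl⟩
    simp [hxa, hxb, hxl, hya, hyb, hyl]
  zero_mem' := by simp
  smul_mem' := by
    rintro c x ⟨ha, hb, hl⟩
    simp [ha, hb, hl]

def loSubmodule : Submodule F (Zorn F) where
  carrier := {x | x.al = 0 ∧ x.be = 0 ∧ x.up = 0}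
  add_mem' := by
    rintro x y ⟨hxa, hxb, hxu⟩ ⟨hya, hyb, hyu⟩
    simp [hxa, hxb, hxu, hya, hyb, hyu]
  zero_mem' := by simp
  smul_mem' := by
    rintro c x ⟨ha, hb, hu⟩
    simp [ha, hb, hu]

lemma span_range_U_le : Submodule.span F (Set.range (U : Fin 3 → Zorn F)) ≤ upSubmodule :=
  Submodule.span_le.mpr (Set.range_subset_iff.mpr fun _ => ⟨rfl, rfl, rfl⟩)

lemma span_range_V_le : Submodule.span F (Set.range (V : Fin 3 → Zorn F)) ≤ loSubmodule :=
  Submodule.span_le.mpr (Set.range_subset_iff.mpr fun _ => ⟨rfl, rfl, rfl⟩)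

lemma t_eq_zero_of_mem_upSubmodule {x : Zorn F} (hx : x ∈ upSubmodule) : t x = 0 := by
  simp [t, hx.1, hx.2.1]

lemma t_eq_zero_of_mem_loSubmodule {x : Zorn F} (hx : x ∈ loSubmodule) : t x = 0 := by
  simp [t, hx.1, hx.2.1]

lemma mul_mem_loSubmodule {x y : Zorn F} (hx : x ∈ upSubmodule) (hy : y ∈ upSubmodule) :
    x * y ∈ loSubmodule := by
  obtain ⟨hxa, hxb, hxl⟩ := hx
  obtain ⟨hya, hyb, hyl⟩ := hy
  exact ⟨by simp [hxa, hyl], by simp [hxb, hyb, hxl], by simp [hxa, hyb, hxl]⟩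

lemma mul_mem_upSubmodule {x y : Zorn F} (hx : x ∈ loSubmodule) (hy : y ∈ loSubmodule) :
    x * y ∈ upSubmodule := by
  obtain ⟨hxa, hxb, hxu⟩ := hx
  obtain ⟨hya, hyb, hyu⟩ := hy
  exact ⟨by simp [hxa, hxu], by simp [hxb, hyb, hyu], by simp [hya, hxb, hxu]⟩

lemma M_mem_of_mul_mem {S T : Submodule F (Zorn F)} (hST : ∀ x ∈ S, ∀ y ∈ S, x * y ∈ T)
    (ht : ∀ x ∈ S, t x = 0) {a b : Zorn F} (ha : a ∈ S) (hb : b ∈ S) : M a b ∈ T := by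
  rw [M, ht a ha, ht b hb, zero_smul, zero_smul, add_zero, sub_zero]
  exact T.smul_mem _ (T.sub_mem (hST a ha b hb) (hST b hb a ha))

lemma Fq_eq_zero_of_mem {S T : Submodule F (Zorn F)} (hST : ∀ x ∈ S, ∀ y ∈ S, x * y ∈ T)
    (hTS : ∀ x ∈ T, ∀ y ∈ T, x * y ∈ S) (ht : ∀ x ∈ S, t x = 0) {a b c d : Zorn F}
    (ha : a ∈ S) (hb : b ∈ S) (hc : c ∈ S) (hd : d ∈ S) : Fq a b c d = 0 :=
  ht _ (hTS _ (M_mem_of_mul_mem hST ht ha hb) _ (M_mem_of_mul_mem hST ht hc hd))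

lemma Q_eq_zero_of_mem {S T : Submodule F (Zorn F)} (hST : ∀ x ∈ S, ∀ y ∈ S, x * y ∈ T)
    (hTS : ∀ x ∈ T, ∀ y ∈ T, x * y ∈ S) (ht : ∀ x ∈ S, t x = 0) {a b c d : Zorn F}
    (ha : a ∈ S) (hb : b ∈ S) (hc : c ∈ S) (hd : d ∈ S) : Q a b c d = 0 := by
  simp only [Q, Fq_eq_zero_of_mem hST hTS ht, ha, hb, hc, hd, sub_zero, mul_zero]

lemma Q_eq_zero_of_mem_upSubmodule {a b c d : Zorn F} (ha : a ∈ upSubmodule)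
    (hb : b ∈ upSubmodule) (hc : c ∈ upSubmodule) (hd : d ∈ upSubmodule) : Q a b c d = 0 :=
  Q_eq_zero_of_mem (fun _ hx _ hy => mul_mem_loSubmodule hx hy)
    (fun _ hx _ hy => mul_mem_upSubmodule hx hy) (fun _ => t_eq_zero_of_mem_upSubmodule)
    ha hb hc hd

lemma Q_eq_zero_of_mem_loSubmodule {a b c d : Zorn F} (ha : a ∈ loSubmodule)
    (hb : b ∈ loSubmodule) (hc : c ∈ loSubmodule) (hd : d ∈ loSubmodule) : Q a b c d = 0 :=
  Q_eq_zero_of_mem (fun _ hx _ hy => mul_mem_upSubmodule hx hy)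
    (fun _ hx _ hy => mul_mem_loSubmodule hx hy) (fun _ => t_eq_zero_of_mem_loSubmodule)
    ha hb hc hd

lemma M_swap (a b : Zorn F) : M b a = -M a b := by
  rw [M, M]
  module

lemma M_e₁_e₂ : M (e₁ : Zorn F) e₂ = e₂ - e₁ := by
  ext <;> simp [M, t, e₁, e₂]

lemma M_e₁_of_mem_upSubmodule {u : Zorn F} (hu : u ∈ upSubmodule) :
    M e₁ u = (1 + 2⁻¹ : F) • u := by
  obtain ⟨ha, hb, hl⟩ := hu
  ext <;> simp [M, t, e₁, ha, hb, hl]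
  ring

lemma M_e₂_of_mem_upSubmodule {u : Zorn F} (hu : u ∈ upSubmodule) :
    M e₂ u = (1 - 2⁻¹ : F) • u := by
  obtain ⟨ha, hb, hl⟩ := hu
  ext <;> simp [M, t, e₂, ha, hb, hl]
  ring

lemma M_e₁_of_mem_loSubmodule {v : Zorn F} (hv : v ∈ loSubmodule) :
    M e₁ v = (1 - 2⁻¹ : F) • v := by
  obtain ⟨ha, hb, hu⟩ := hv
  ext <;> simp [M, t, e₁, ha, hb, hu]
  ring

lemma M_e₂_of_mem_loSubmodule {v : Zorn F} (hv : v ∈ loSubmodule) :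
    M e₂ v = (1 + 2⁻¹ : F) • v := by
  obtain ⟨ha, hb, hu⟩ := hv
  ext <;> simp [M, t, e₂, ha, hb, hu]
  ring

lemma M_of_mem_upSubmodule_loSubmodule {u v : Zorn F} (hu : u ∈ upSubmodule)
    (hv : v ∈ loSubmodule) :
    M u v = (2⁻¹ * (u.up ⬝ᵥ v.lo)) • (e₁ - e₂) := by
  obtain ⟨hua, hub, hul⟩ := hu
  obtain ⟨hva, hvb, hvu⟩ := hv
  ext <;> simp [M, t, e₁, e₂, hua, hub, hul, hva, hvb, hvu, dotProduct_comm v.lo]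

lemma t_smul_mul_smul_of_mem_upSubmodule_loSubmodule {u v : Zorn F} (hu : u ∈ upSubmodule)
    (hv : v ∈ loSubmodule) (c d : F) :
    t ((c • u) * (d • v)) = c * d * (u.up ⬝ᵥ v.lo) := by
  obtain ⟨hua, hub, hul⟩ := hu
  obtain ⟨hva, hvb, hvu⟩ := hv
  simp [t, hua, hub, hul, hva, hvb, hvu]
  ring

lemma t_smul_mul_smul_of_mem_loSubmodule_upSubmodule {u v : Zorn F} (hu : u ∈ upSubmodule)
    (hv : v ∈ loSubmodule) (c d : F) :
    t ((c • v) * (d • u)) = c * d * (u.up ⬝ᵥ v.lo) := by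
  obtain ⟨hua, hub, hul⟩ := hu
  obtain ⟨hva, hvb, hvu⟩ := hv
  simp [t, hua, hub, hul, hva, hvb, hvu, dotProduct_comm v.lo]
  ring

lemma Q_e₁_e₂_of_mem {u v : Zorn F} (hu : u ∈ upSubmodule) (hv : v ∈ loSubmodule)
    (h6 : (6 : F) ≠ 0) : Q e₁ e₂ u v = -(u.up ⬝ᵥ v.lo) := by
  simp only [Q, Fq, M_swap e₂ u, M_swap e₂ v, M_swap e₁ u, M_swap e₁ e₂, M_e₁_e₂,
    M_e₁_of_mem_upSubmodule hu, M_e₂_of_mem_upSubmodule hu, M_e₁_of_mem_loSubmodule hv,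
    M_e₂_of_mem_loSubmodule hv, M_of_mem_upSubmodule_loSubmodule hu hv, ← neg_smul,
    t_smul_mul_smul_of_mem_upSubmodule_loSubmodule hu hv,
    t_smul_mul_smul_of_mem_loSubmodule_upSubmodule hu hv]
  have h2 : (2 : F) ≠ 0 := fun h => h6 (by linear_combination 3 * h)
  simp [t, e₁, e₂]
  field_simp
  ring

end Zorn

/-- `Q` vanishes when all four arguments lie in `span{u₁,u₂,u₃}` or all in
`span{v₁,v₂,v₃}`; and `Q(e₁, e₂, u_i, v_j) = −δ_{ij}`. -/
theorem zorn_Q_vanishing {F : Type*} [Field F] (h2 : (2 : F) ≠ 0) (h3 : (3 : F) ≠ 0) :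
    (∀ a₁ a₂ a₃ a₄ : Zorn F,
      a₁ ∈ Submodule.span F (Set.range (U : Fin 3 → Zorn F)) →
      a₂ ∈ Submodule.span F (Set.range (U : Fin 3 → Zorn F)) →
      a₃ ∈ Submodule.span F (Set.range (U : Fin 3 → Zorn F)) →
      a₄ ∈ Submodule.span F (Set.range (U : Fin 3 → Zorn F)) →
      Q a₁ a₂ a₃ a₄ = 0) ∧
    (∀ a₁ a₂ a₃ a₄ : Zorn F,
      a₁ ∈ Submodule.span F (Set.range (V : Fin 3 → Zorn F)) →
      a₂ ∈ Submodule.span F (Set.range (V : Fin 3 → Zorn F)) →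
      a₃ ∈ Submodule.span F (Set.range (V : Fin 3 → Zorn F)) →
      a₄ ∈ Submodule.span F (Set.range (V : Fin 3 → Zorn F)) →
      Q a₁ a₂ a₃ a₄ = 0) ∧
    (∀ i j : Fin 3, Q (e₁ : Zorn F) e₂ (U i) (V j) = if i = j then (-1 : F) else 0) := by
  have h6 : (6 : F) ≠ 0 := by
    rw [show (6 : F) = 2 * 3 by norm_num]
    exact mul_ne_zero h2 h3
  refine ⟨fun a₁ a₂ a₃ a₄ h₁ h₂ h₃ h₄ => ?_, fun a₁ a₂ a₃ a₄ h₁ h₂ h₃ h₄ => ?_, fun i j => ?_⟩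
  · exact Q_eq_zero_of_mem_upSubmodule (span_range_U_le h₁) (span_range_U_le h₂)
      (span_range_U_le h₃) (span_range_U_le h₄)
  · exact Q_eq_zero_of_mem_loSubmodule (span_range_V_le h₁) (span_range_V_le h₂)
      (span_range_V_le h₃) (span_range_V_le h₄)
  · rw [Q_e₁_e₂_of_mem ⟨rfl, rfl, rfl⟩ ⟨rfl, rfl, rfl⟩ h6]
    simp [U, V, Pi.single_apply, eq_comm, apply_ite]
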